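/- arXiv:2010.14869 — 3 statements merged into one kernel-verified Lean document; each statement's English description precedes it below -/
import Mathlib

section
/- Let A be an abelian category with enough projectives, V a subcategory with Ext¹(V, Fac V) = 0, and P a projective object. Suppose P →v V₀ → W → 0 is exact where V₀ ∈ V and v is a left V-approximation (every morphism P → V' with V' ∈ V factors through v). Then W is Ext-projective in Fac V, i.e. Ext¹(W, Z) = 0 for all Z ∈ Fac V. -/
open CategoryTheory Limits Opposite

noncomputable section

universe v u

variable {C : Type u} [Category.{v} C] [Abelian C] [EnoughProjectives C]

attribute [local instance] CategoryTheory.Abelian.hasFiniteBiproducts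

/-- `Fac M`: quotients of finite direct sums of objects of `M`. -/
def Fac (M : Set C) : Set C :=
  {X | ∃ (n : ℕ) (f : Fin n → C), (∀ i, f i ∈ M) ∧
    haveI : HasBiproductsOfShape (Fin n) C := HasFiniteBiproducts.out n
    ∃ e : (⨁ f) ⟶ X, Epi e}

/-- Vanishing of `Ext¹(X, Y)`. -/
def ext1Zero (X Y : C) : Prop := Subsingleton (((Ext ℤ C 1).obj (op X)).obj Y)

/-- Vanishing of `Ext²(X, Y)`. -/
def ext2Zero (X Y : C) : Prop := Subsingleton (((Ext ℤ C 2).obj (op X)).obj Y)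

/-- `v : P ⟶ V₀` is a left `M`-approximation. -/
def IsLeftApprox (M : Set C) {P V₀ : C} (v : P ⟶ V₀) : Prop :=
  ∀ V' ∈ M, ∀ h : P ⟶ V', ∃ t : V₀ ⟶ V', v ≫ t = h

/-- `u : U₀ ⟶ X` is a right `M`-approximation. -/
def IsRightApprox (M : Set C) {U₀ X : C} (u : U₀ ⟶ X) : Prop :=
  ∀ M' ∈ M, ∀ h : M' ⟶ X, ∃ t : M' ⟶ U₀, t ≫ u = h

/-- The Ext-projective objects of `S`. -/
def ExtProj (S : Set C) : Set C := {D ∈ S | ∀ Z ∈ S, ext1Zero D Z}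

/-- `M` is τ-rigid: `Ext¹(M, Fac M) = 0`. -/
def TauRigid (M : Set C) : Prop := ∀ M₀ ∈ M, ∀ X ∈ Fac M, ext1Zero M₀ X

/-- `P` admits an exact sequence `P ⟶ Ma ⟶ Mb ⟶ 0` with `Ma, Mb ∈ M` and the
first map a left `M`-approximation. -/
def HasApproxSeq (M : Set C) (P : C) : Prop :=
  ∃ M₀ ∈ M, ∃ M₁ ∈ M, ∃ (m : P ⟶ M₀) (g : M₀ ⟶ M₁) (w : m ≫ g = 0),
    (ShortComplex.mk m g w).Exact ∧ Epi g ∧ IsLeftApprox M m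

/-- `M` is a support τ-tilting subcategory. -/
def SupportTauTilting (M : Set C) : Prop :=
  TauRigid M ∧ ∀ P : C, Projective P → HasApproxSeq M P

/-- `0 ⟶ X ⟶ Y ⟶ Z ⟶ 0` is a short exact sequence. -/
def SES {X Y Z : C} (f : X ⟶ Y) (g : Y ⟶ Z) : Prop :=
  ∃ w : f ≫ g = 0, (ShortComplex.mk f g w).Exact ∧ Mono f ∧ Epi g

/-- `U` is hereditary: `Ext²(U, −) = 0`. -/
def Hereditary1 (U : Set C) : Prop := ∀ U₀ ∈ U, ∀ X : C, ext2Zero U₀ X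

/-- `U` is partial tilting. -/
def PartialTilting (U : Set C) : Prop :=
  Hereditary1 U ∧ ∀ U₀ ∈ U, ∀ U₁ ∈ U, ext1Zero U₀ U₁

/-- `U` is tilting. -/
def Tilting (U : Set C) : Prop :=
  PartialTilting U ∧ ∀ P : C, Projective P →
    ∃ Ua ∈ U, ∃ Ub ∈ U, ∃ (i : P ⟶ Ua) (p : Ua ⟶ Ub), SES i p

/-- `U^⊥₁ = {X | Ext¹(U, X) = 0}`. -/
def Perp1 (U : Set C) : Set C := {X | ∀ U₀ ∈ U, ext1Zero U₀ X}

/-- `M` is closed under finite direct sums and direct summands. -/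
def AdditivelyClosed (M : Set C) : Prop :=
  (∀ (n : ℕ) (f : Fin n → C), (∀ i, f i ∈ M) →
    haveI : HasBiproductsOfShape (Fin n) C := HasFiniteBiproducts.out n
    (⨁ f) ∈ M) ∧
  (∀ M₀ ∈ M, ∀ (X : C) (r : M₀ ⟶ X) (s : X ⟶ M₀), s ≫ r = 𝟙 X → X ∈ M)

/-- The additive closure of a class of objects: direct summands of finite
direct sums of its objects. -/
def AddClosure (X : Set C) : Set C :=
  {Y | ∃ (n : ℕ) (f : Fin n → C), (∀ i, f i ∈ X) ∧
    haveI : HasBiproductsOfShape (Fin n) C := HasFiniteBiproducts.out n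
    ∃ (r : (⨁ f) ⟶ Y) (s : Y ⟶ ⨁ f), s ≫ r = 𝟙 Y}

/-!
`Ext¹(X, Z)` can be read off any projective presentation `π : Q ⟶ X`: it vanishes iff every
map `ker π ⟶ Z` extends to `Q`. Applied to `0 ⟶ K ⟶ V₀ ⟶ W ⟶ 0` with `Ext¹(V₀, Z) = 0`, this
reduces `Ext¹(W, Z) = 0` to extending maps `K ⟶ Z` along `K ⟶ V₀`. For `Z ∈ Fac V` such an
extension exists: `P ⟶ K` is epi, and since `P` is projective every map `P ⟶ Z` lifts to a
finite sum of objects of `V`, hence factors through the left approximation `v`.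
-/

open Projective

lemma CategoryTheory.Projective.d_comp {X Y : C} (f : X ⟶ Y) : d f ≫ f = 0 := by
  erw [Category.assoc, kernel.condition, comp_zero]

namespace CategoryTheory.ProjectiveResolution

variable {Q X : C} (π : Q ⟶ X)

def ofEpiComplex : ChainComplex C ℕ :=
  ChainComplex.mk' Q (syzygies π) (d π) fun f => ⟨_, d f, d_comp f⟩

lemma ofEpiComplex_d_1_0 : (ofEpiComplex π).d 1 0 = d π :=
  ChainComplex.mk'_d_1_0 _ _ _ _

lemma ofEpiComplex_d_2_1 : (ofEpiComplex π).d 2 1 = d (d π) :=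
  ChainComplex.mk_d_2_1 _ _ _ _ _ _ _

lemma ofEpiComplex_exactAt_succ (n : ℕ) : (ofEpiComplex π).ExactAt (n + 1) := by
  rw [HomologicalComplex.exactAt_iff' _ (n + 1 + 1) (n + 1) n (by simp) (by simp)]
  let K := ofEpiComplex π
  refine (ShortComplex.exact_iff_of_iso
    (S₁ := ShortComplex.mk (d (K.d (n + 1) n)) (K.d (n + 1) n) (d_comp _))
    (S₂ := K.sc' (n + 1 + 1) (n + 1) n)
    (ShortComplex.isoMk (ChainComplex.mk'XIso Q (syzygies π) (d π)
      (fun f => ⟨_, d f, d_comp f⟩) n).symm (Iso.refl _) (Iso.refl _) ?_ ?_)).1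
    (exact_d_f (K.d (n + 1) n))
  · show _ ≫ K.d (n + 2) (n + 1) = _ ≫ 𝟙 _
    rw [show K.d (n + 2) (n + 1) = _ from ChainComplex.mk'_d _ _ _ _ n]
    exact (Iso.inv_hom_id_assoc _ _).trans (Category.comp_id _).symm
  · dsimp
    erw [Category.id_comp, Category.comp_id]
    rfl

instance [Projective Q] (n : ℕ) : Projective ((ofEpiComplex π).X n) := by
  obtain (_ | _ | _ | n) := n
  · assumption
  all_goals apply Projective.projective_over

variable [Projective Q] [Epi π]

def ofEpi : ProjectiveResolution X where
  complex := ofEpiComplex π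
  π := (ChainComplex.toSingle₀Equiv _ _).symm ⟨π, by rw [ofEpiComplex_d_1_0]; exact d_comp π⟩
  quasiIso := ⟨fun n => by
    cases n
    · rw [ChainComplex.quasiIsoAt₀_iff, ShortComplex.quasiIso_iff_of_zeros']
      · refine (ShortComplex.exact_and_epi_g_iff_of_iso ?_).2
          ⟨exact_d_f π, by dsimp; infer_instance⟩
        exact ShortComplex.isoMk (Iso.refl _) (Iso.refl _) (Iso.refl _)
          (by erw [Category.id_comp, Category.comp_id]; exact (ofEpiComplex_d_1_0 π).symm)
          (by erw [Category.id_comp, Category.comp_id]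
              exact (ChainComplex.toSingle₀Equiv_symm_apply_f_zero (C := ofEpiComplex π) π _).symm)
      all_goals rfl
    · rw [quasiIsoAt_iff_exactAt']
      · apply ofEpiComplex_exactAt_succ
      · apply ChainComplex.exactAt_succ_single_obj⟩

lemma ext1Zero_iff {X : C} (R : ProjectiveResolution X) (Z : C) :
    ext1Zero X Z ↔ ∀ φ : R.complex.X 1 ⟶ Z, R.complex.d 2 1 ≫ φ = 0 →
      ∃ ψ : R.complex.X 0 ⟶ Z, R.complex.d 1 0 ≫ ψ = φ := by
  rw [ext1Zero, (R.isoExt 1 Z).toLinearEquiv.toEquiv.subsingleton_congr,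
    ← ModuleCat.isZero_iff_subsingleton, ← HomologicalComplex.exactAt_iff_isZero_homology,
    HomologicalComplex.exactAt_iff' _ 0 1 2 (by simp) (by simp),
    ShortComplex.moduleCat_exact_iff]
  rfl

end CategoryTheory.ProjectiveResolution

def ExtendsAlong {A B : C} (i : A ⟶ B) (Z : C) : Prop :=
  ∀ h : A ⟶ Z, ∃ ψ : B ⟶ Z, i ≫ ψ = h

omit [EnoughProjectives C] in
lemma extendsAlong_iff_of_exact {K₂ K₁ E K₀ : C} (f : K₂ ⟶ K₁) (q : K₁ ⟶ E) [Epi q]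
    (i : E ⟶ K₀) [Mono i] (w : f ≫ q ≫ i = 0) (hS : (ShortComplex.mk f (q ≫ i) w).Exact)
    (Z : C) :
    ExtendsAlong i Z ↔ ∀ φ : K₁ ⟶ Z, f ≫ φ = 0 → ∃ ψ : K₀ ⟶ Z, (q ≫ i) ≫ ψ = φ := by
  have hfq : f ≫ q = 0 := by rw [← cancel_mono i, Category.assoc, w, zero_comp]
  have hS' : (ShortComplex.mk f q hfq).Exact := by
    refine (ShortComplex.exact_iff_of_epi_of_isIso_of_mono (S₁ := ShortComplex.mk f q hfq)
      (S₂ := ShortComplex.mk f (q ≫ i) w) ⟨𝟙 _, 𝟙 _, i, by simp, by simp⟩).2 hS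
  constructor
  · intro hi φ hφ
    obtain ⟨ψ, hψ⟩ := hi (hS'.desc φ hφ)
    exact ⟨ψ, by rw [Category.assoc, hψ]; exact hS'.g_desc φ hφ⟩
  · intro hext h
    obtain ⟨ψ, hψ⟩ := hext (q ≫ h) (by rw [reassoc_of% hfq, zero_comp])
    exact ⟨ψ, (cancel_epi q).1 (by rw [← hψ, Category.assoc])⟩

lemma ext1Zero_iff_extendsAlong_kernel_ι {Q X : C} [Projective Q] (π : Q ⟶ X) [Epi π] (Z : C) :
    ext1Zero X Z ↔ ExtendsAlong (kernel.ι π) Z := by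
  rw [(ProjectiveResolution.ofEpi π).ext1Zero_iff, extendsAlong_iff_of_exact
    (K₁ := Projective.over (kernel π)) _ _ _ _ (exact_d_f (d π))]
  dsimp only [ProjectiveResolution.ofEpi]
  rw [ProjectiveResolution.ofEpiComplex_d_2_1, ProjectiveResolution.ofEpiComplex_d_1_0]
  rfl

section KernelOfComp

variable {X Y Z : C} (f : X ⟶ Y) (g : Y ⟶ Z)

omit [EnoughProjectives C] in
lemma exact_kernel_map_comp :
    (ShortComplex.mk (kernel.map f (f ≫ g) (𝟙 _) g (by simp))
      (kernel.map (f ≫ g) g f (𝟙 _) (by simp)) (by ext; simp)).Exact :=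
  (kernelCokernelCompSequence_exact f g).exact 0

omit [EnoughProjectives C] in
lemma epi_kernel_map_comp [Epi f] : Epi (kernel.map (f ≫ g) g f (𝟙 _) (by simp)) :=
  ((kernelCokernelCompSequence_exact f g).exact 1).epi_f
    ((isZero_cokernel_of_epi f).eq_of_tgt _ _)

end KernelOfComp

lemma ext1Zero_of_extendsAlong_kernel_ι {Y W Z : C} (g : Y ⟶ W) [Epi g] (hY : ext1Zero Y Z)
    (hg : ExtendsAlong (kernel.ι g) Z) : ext1Zero W Z := by
  let π := Projective.π Y
  have hπ := (ext1Zero_iff_extendsAlong_kernel_ι π Z).1 hY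
  have := epi_kernel_map_comp π g
  have hS := exact_kernel_map_comp π g
  refine (ext1Zero_iff_extendsAlong_kernel_ι (π ≫ g) Z).2 fun h => ?_
  -- extend `h` on `ker π` first; the rest factors through `ker (π ≫ g) ⟶ ker g` and extends by `hg`
  obtain ⟨ψ₁, hψ₁⟩ := hπ (kernel.map π (π ≫ g) (𝟙 _) g (by simp) ≫ h)
  have hvanish : kernel.map π (π ≫ g) (𝟙 _) g (by simp) ≫ (h - kernel.ι (π ≫ g) ≫ ψ₁) = 0 := by
    simp [hψ₁]
  obtain ⟨ψ₂, hψ₂⟩ := hg (hS.desc _ hvanish)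
  have hι : kernel.map (π ≫ g) g π (𝟙 _) (by simp) ≫ kernel.ι g = kernel.ι (π ≫ g) ≫ π := by
    simp
  refine ⟨ψ₁ + π ≫ ψ₂, ?_⟩
  rw [Preadditive.comp_add, ← Category.assoc, ← hι, Category.assoc, hψ₂, hS.g_desc]
  abel

omit [EnoughProjectives C] in
lemma mem_fac_of_epi {M : Set C} {V₀ W : C} (hV₀ : V₀ ∈ M) (g : V₀ ⟶ W) [Epi g] :
    W ∈ Fac M :=
  ⟨1, fun _ => V₀, fun _ => hV₀, biproduct.desc fun _ => g,
    epi_of_epi_fac (biproduct.ι_desc (fun _ => g) 0)⟩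

omit [EnoughProjectives C] in
lemma IsLeftApprox.fac {M : Set C} {P V₀ : C} [Projective P] {v : P ⟶ V₀}
    (hv : IsLeftApprox M v) : IsLeftApprox (Fac M) v := by
  rintro Z ⟨n, f, hf, e, he⟩ h
  have : HasBiproductsOfShape (Fin n) C := HasFiniteBiproducts.out n
  choose t ht using fun i => hv (f i) (hf i) (Projective.factorThru h e ≫ biproduct.π f i)
  have hlift : v ≫ biproduct.lift t = Projective.factorThru h e :=
    biproduct.hom_ext _ _ fun i => by simp [ht]
  exact ⟨biproduct.lift t ≫ e, by rw [← Category.assoc, hlift, Projective.factorThru_comp]⟩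

omit [EnoughProjectives C] in
lemma IsLeftApprox.extendsAlong_kernel_ι {M : Set C} {P V₀ W Z : C} {v : P ⟶ V₀} {g : V₀ ⟶ W}
    {w : v ≫ g = 0} (hv : IsLeftApprox M v) (hex : (ShortComplex.mk v g w).Exact) (hZ : Z ∈ M) :
    ExtendsAlong (kernel.ι g) Z := by
  intro h
  have : Epi (kernel.lift g v w) := (ShortComplex.exact_iff_epi_kernel_lift _).1 hex
  obtain ⟨t, ht⟩ := hv Z hZ (kernel.lift g v w ≫ h)
  exact ⟨t, (cancel_epi (kernel.lift g v w)).1 (by rw [← ht, kernel.lift_ι_assoc])⟩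

theorem stmt3 (V : Set C) (hV : TauRigid V) {P V₀ W : C}
    (hP : Projective P) (hV₀ : V₀ ∈ V) (v : P ⟶ V₀) (g : V₀ ⟶ W)
    (w : v ≫ g = 0) (hex : (ShortComplex.mk v g w).Exact) (hepi : Epi g)
    (happ : IsLeftApprox V v) :
    W ∈ Fac V ∧ ∀ Z ∈ Fac V, ext1Zero W Z :=
  ⟨mem_fac_of_epi hV₀ g, fun Z hZ => ext1Zero_of_extendsAlong_kernel_ι g (hV V₀ hV₀ Z hZ)
    (happ.fac.extendsAlong_kernel_ι hex hZ)⟩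
end
end

section
/- Let A be an abelian category with enough projectives and enough injectives, and let U be a tilting subcategory. Then U^⊥₁ = Fac U, where U^⊥₁ = {X ∈ A : Ext¹(U₀, X) = 0 for all U₀ ∈ U}. -/
open CategoryTheory Limits Opposite

noncomputable section

universe v u

variable {C : Type u} [Category.{v} C] [Abelian C] [EnoughProjectives C]

attribute [local instance] CategoryTheory.Abelian.hasFiniteBiproducts

/-!
`Fac U ⊆ U^⊥₁`: `Ext¹(U, −)` vanishes on finite direct sums of objects of `U`, and it passes to
a quotient `M ↠ X` because the obstruction to lifting a class along `M ↠ X` lies in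
`Ext²(U, ker) = 0`.

`U^⊥₁ ⊆ Fac U`: for `X ∈ U^⊥₁` take an epimorphism `P ↠ X` from a projective and the tilting
sequence `0 → P → Ua → Ub → 0`. Since `Ext¹(Ub, X) = 0`, the map `P → X` extends to `Ua → X`,
which is then an epimorphism.
-/

lemma ext_subsingleton_iff (W Y : C) (P : ProjectiveResolution W) (n : ℕ) :
    Subsingleton (((Ext ℤ C (n + 1)).obj (op W)).obj Y) ↔
      ∀ β : P.complex.X (n + 1) ⟶ Y, P.complex.d (n + 2) (n + 1) ≫ β = 0 →
        ∃ γ : P.complex.X n ⟶ Y, P.complex.d (n + 1) n ≫ γ = β := by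
  rw [← ModuleCat.isZero_iff_subsingleton, (P.isoExt (n + 1) Y).isZero_iff,
    ← HomologicalComplex.exactAt_iff_isZero_homology,
    HomologicalComplex.exactAt_iff' _ n (n + 1) (n + 2) (by simp) (by simp),
    ShortComplex.moduleCat_exact_iff]
  rfl

lemma ext1Zero_iff (W Y : C) (P : ProjectiveResolution W) :
    ext1Zero W Y ↔ ∀ β : P.complex.X 1 ⟶ Y, P.complex.d 2 1 ≫ β = 0 →
      ∃ γ : P.complex.X 0 ⟶ Y, P.complex.d 1 0 ≫ γ = β :=
  ext_subsingleton_iff W Y P 0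

lemma ext2Zero_iff (W Y : C) (P : ProjectiveResolution W) :
    ext2Zero W Y ↔ ∀ β : P.complex.X 2 ⟶ Y, P.complex.d 3 2 ≫ β = 0 →
      ∃ γ : P.complex.X 1 ⟶ Y, P.complex.d 2 1 ≫ γ = β :=
  ext_subsingleton_iff W Y P 1

lemma ext1Zero_biproduct {W : C} {n : ℕ} (f : Fin n → C) [HasBiproductsOfShape (Fin n) C]
    (h : ∀ i, ext1Zero W (f i)) : ext1Zero W (⨁ f) := by
  let P := ProjectiveResolution.of W
  rw [ext1Zero_iff W _ P]
  intro β hβ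
  have hcomp (i : Fin n) : ∃ γ : P.complex.X 0 ⟶ f i,
      P.complex.d 1 0 ≫ γ = β ≫ biproduct.π f i :=
    (ext1Zero_iff W (f i) P).mp (h i) _ (by rw [← Category.assoc, hβ, zero_comp])
  choose γ hγ using hcomp
  exact ⟨biproduct.lift γ, by ext i; simp [hγ]⟩

lemma ext1Zero_of_epi {W M X : C} (e : M ⟶ X) [Epi e]
    (hM : ext1Zero W M) (hker : ext2Zero W (kernel e)) : ext1Zero W X := by
  let P := ProjectiveResolution.of W
  rw [ext1Zero_iff W X P]
  rw [ext1Zero_iff W M P] at hM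
  rw [ext2Zero_iff W (kernel e) P] at hker
  intro β hβ
  let β' := Projective.factorThru β e
  have hβ' : β' ≫ e = β := Projective.factorThru_comp β e
  let δ := kernel.lift e (P.complex.d 2 1 ≫ β') (by rw [Category.assoc, hβ', hβ])
  have hδ : δ ≫ kernel.ι e = P.complex.d 2 1 ≫ β' := kernel.lift_ι _ _ _
  obtain ⟨η, hη⟩ := hker δ (by
    rw [← cancel_mono (kernel.ι e), Category.assoc, hδ, zero_comp,
      HomologicalComplex.d_comp_d_assoc, zero_comp])
  obtain ⟨γ, hγ⟩ := hM (β' - η ≫ kernel.ι e) (by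
    rw [Preadditive.comp_sub, ← Category.assoc, hη, hδ, sub_self])
  refine ⟨γ ≫ e, ?_⟩
  rw [← Category.assoc, hγ, Preadditive.sub_comp, hβ', Category.assoc,
    kernel.condition, comp_zero, sub_zero]

lemma SES.exists_section {X Y Z : C} {f : X ⟶ Y} {g : Y ⟶ Z} (hfg : SES f g)
    (hZX : ext1Zero Z X) : ∃ σ : Z ⟶ Y, σ ≫ g = 𝟙 Z := by
  obtain ⟨w, hex, hf, hg⟩ := hfg
  let P := ProjectiveResolution.of Z
  rw [ext1Zero_iff Z X P] at hZX
  let π₀ : P.complex.X 0 ⟶ Z := P.π.f 0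
  let α := Projective.factorThru π₀ g
  have hα : α ≫ g = π₀ := Projective.factorThru_comp _ _
  obtain ⟨β, hβ⟩ := hex.lift' (P.complex.d 1 0 ≫ α) (by
    rw [Category.assoc, hα]; exact P.complex_d_comp_π_f_zero)
  obtain ⟨γ, hγ⟩ := hZX β (by
    rw [← cancel_mono f, zero_comp, Category.assoc, hβ,
      HomologicalComplex.d_comp_d_assoc, zero_comp])
  -- `α - γ ≫ f` kills the boundaries, so it descends to `Z = coker (P₁ ⟶ P₀)`.
  obtain ⟨σ, hσ⟩ : ∃ σ : Z ⟶ Y, π₀ ≫ σ = α - γ ≫ f :=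
    ⟨_, (CokernelCofork.IsColimit.desc' P.isColimitCokernelCofork (α - γ ≫ f) (by
      rw [Preadditive.comp_sub, ← Category.assoc, hγ, hβ, sub_self])).2⟩
  have : Epi π₀ := inferInstanceAs (Epi (P.π.f 0))
  refine ⟨σ, (cancel_epi π₀).mp ?_⟩
  rw [← Category.assoc, hσ, Preadditive.sub_comp, hα, Category.assoc, w, comp_zero, sub_zero,
    Category.comp_id]

lemma CategoryTheory.IsPushout.exact_of_exact {D : Type*} [Category D] [Abelian D]
    {A B Y E Z : D} {i : A ⟶ B} {a : A ⟶ Y} {inl : B ⟶ E} {inr : Y ⟶ E}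
    (sq : IsPushout i a inl inr)
    {p : B ⟶ Z} (w : i ≫ p = 0) (hex : (ShortComplex.mk i p w).Exact) [Mono i]
    {q : E ⟶ Z} (hlq : inl ≫ q = p) (hrq : inr ≫ q = 0) :
    (ShortComplex.mk inr q hrq).Exact := by
  rw [ShortComplex.exact_iff_exact_up_to_refinements]
  intro T x hx
  obtain ⟨T', π, _, xB, xY, hxT⟩ := sq.hom_eq_add_up_to_refinements x
  have hxB : xB ≫ p = 0 := by
    simpa [hlq, hrq, hx] using (congrArg (· ≫ q) hxT).symm
  obtain ⟨xA, hxA⟩ := hex.lift' xB hxB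
  refine ⟨T', π, inferInstance, xA ≫ a + xY, ?_⟩
  rw [hxT, Preadditive.add_comp, Category.assoc, ← sq.w, ← Category.assoc, hxA]

-- The pushout of the sequence along `h` splits; its retraction, restricted to `Y`, extends `h`.
lemma SES.exists_extension {X Y Z W : C} {f : X ⟶ Y} {g : Y ⟶ Z} (hfg : SES f g)
    (hZW : ext1Zero Z W) (h : X ⟶ W) : ∃ t : Y ⟶ W, f ≫ t = h := by
  obtain ⟨w, hex, hf, hg⟩ := hfg
  let q : pushout f h ⟶ Z := pushout.desc g 0 (by rw [w, comp_zero])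
  have hlq : pushout.inl f h ≫ q = g := pushout.inl_desc _ _ _
  have hrq : pushout.inr f h ≫ q = 0 := pushout.inr_desc _ _ _
  have hexE := (IsPushout.of_hasPushout f h).exact_of_exact w hex hlq hrq
  have hE : SES (pushout.inr f h) q := ⟨hrq, hexE, inferInstance, epi_of_epi_fac hlq⟩
  obtain ⟨σ, hσ⟩ := hE.exists_section hZW
  let spl := ShortComplex.Splitting.ofExactOfSection _ hexE σ hσ inferInstance
  exact ⟨pushout.inl f h ≫ spl.r, by rw [← Category.assoc, pushout.condition,
    Category.assoc, spl.f_r, Category.comp_id]⟩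

lemma mem_fac_of_epi_s11 {D : Type*} [Category D] [Abelian D] {M : Set D} {M₀ X : D}
    (hM₀ : M₀ ∈ M) (e : M₀ ⟶ X) [Epi e] :
    X ∈ Fac M :=
  ⟨1, fun _ => M₀, fun _ => hM₀, biproduct.desc fun _ => e,
    epi_of_epi_fac (biproduct.ι_desc (fun _ : Fin 1 => e) 0)⟩

lemma perp1_subset_fac {U : Set C} (hU : ∀ P : C, Projective P →
      ∃ Ua ∈ U, ∃ Ub ∈ U, ∃ (i : P ⟶ Ua) (p : Ua ⟶ Ub), SES i p) :
    Perp1 U ⊆ Fac U := by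
  intro X hX
  obtain ⟨Ua, hUa, Ub, hUb, i, p, hip⟩ := hU _ (Projective.projective_over X)
  obtain ⟨t, ht⟩ := hip.exists_extension (hX Ub hUb) (Projective.π X)
  have : Epi t := epi_of_epi_fac ht
  exact mem_fac_of_epi_s11 hUa t

lemma PartialTilting.fac_subset_perp1 {U : Set C} (hU : PartialTilting U) :
    Fac U ⊆ Perp1 U := by
  rintro X ⟨n, f, hf, e, he⟩ W hW
  have : HasBiproductsOfShape (Fin n) C := HasFiniteBiproducts.out n
  exact ext1Zero_of_epi e (ext1Zero_biproduct f fun i => hU.2 W hW (f i) (hf i))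
    (hU.1 W hW (kernel e))

theorem stmt11_general (U : Set C) (h : Tilting U) :
    Perp1 U = Fac U :=
  (perp1_subset_fac h.2).antisymm h.1.fac_subset_perp1

theorem stmt11 [EnoughInjectives C] (U : Set C) (h : Tilting U) :
    Perp1 U = Fac U :=
  stmt11_general U h
end
end

section
/- Let A be an abelian category with enough projectives and enough injectives, and U a contravariantly finite partial tilting subcategory with U^⊥₁ = Fac U. Then U is a tilting subcategory: every projective P admits a short exact sequence 0 → P → U⁰ → U¹ → 0 with U⁰, U¹ ∈ U. -/
open CategoryTheory Limits Opposite

noncomputable section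

universe v u

variable {C : Type u} [Category.{v} C] [Abelian C] [EnoughProjectives C]

attribute [local instance] CategoryTheory.Abelian.hasFiniteBiproducts

/-!
Embed the projective `P` into an injective `I`. As `I ∈ U^⊥₁ = Fac U`, so is `C = I / P`, and a
right `U`-approximation `W ⟶ C` is an epimorphism whose kernel `L` lies in `U^⊥₁` (by rigidity of
`U`). The pullback `E` of `I ⟶ C ⟵ W` is an extension of `W` by `P` and of `I` by `L`, so
`E ∈ U^⊥₁ = Fac U`. A right `U`-approximation `U' ⟶ E` is then an epimorphism with kernel
`L' ∈ U^⊥₁`; as `P` is projective, `Ext¹(E, L')` is a quotient of `Ext¹(W, L') = 0`, so `U' ⟶ E`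
splits and `E ∈ U`. Hence `0 ⟶ P ⟶ E ⟶ W ⟶ 0` is the required sequence.
-/

section

variable {D : Type*} [Category D] [Abelian D]

lemma forall_exists_comp_iff_of_exact {A B K Q Y : D} {d : A ⟶ B} {g : B ⟶ Q} {hd : d ≫ g = 0}
    (hex : (ShortComplex.mk d g hd).Exact) (π : B ⟶ K) (ι : K ⟶ Q) [Epi π] [Mono ι]
    (hg : π ≫ ι = g) :
    (∀ x : B ⟶ Y, d ≫ x = 0 → ∃ y : Q ⟶ Y, g ≫ y = x) ↔ ∀ h : K ⟶ Y, ∃ t : Q ⟶ Y, ι ≫ t = h := by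
  subst hg
  have hdπ : d ≫ π = 0 := by rw [← cancel_mono ι, Category.assoc, hd, zero_comp]
  let φ : ShortComplex.mk d π hdπ ⟶ ShortComplex.mk d (π ≫ ι) hd :=
    { τ₁ := 𝟙 _, τ₂ := 𝟙 _, τ₃ := ι }
  have hexπ : (ShortComplex.mk d π hdπ).Exact := by
    rwa [ShortComplex.exact_iff_of_epi_of_isIso_of_mono φ]
  constructor
  · intro h g
    obtain ⟨y, hy⟩ := h (π ≫ g) (by rw [← Category.assoc, hdπ, zero_comp])
    exact ⟨y, by rw [← cancel_epi π, ← hy, Category.assoc]⟩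
  · intro h x hx
    obtain ⟨t, ht⟩ := h (hexπ.desc x hx)
    exact ⟨t, by rw [Category.assoc, ht]; exact hexπ.g_desc x hx⟩

lemma exists_comp_eq_of_shortExact {K Q K' Q' X Y : D} {m : K ⟶ Q} {p : Q ⟶ X}
    {m' : K' ⟶ Q'} {p' : Q' ⟶ X} {w : m ≫ p = 0} {w' : m' ≫ p' = 0}
    (hS : (ShortComplex.mk m p w).ShortExact) (hS' : (ShortComplex.mk m' p' w').ShortExact)
    [Projective Q] [Projective Q'] (h : ∀ g : K ⟶ Y, ∃ t : Q ⟶ Y, m ≫ t = g) (g : K' ⟶ Y) :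
    ∃ t : Q' ⟶ Y, m' ≫ t = g := by
  have := hS.mono_f
  have := hS.epi_g
  have := hS'.mono_f
  have := hS'.epi_g
  obtain ⟨α, hα⟩ : ∃ α : Q ⟶ Q', α ≫ p' = p := ⟨_, Projective.factorThru_comp p p'⟩
  obtain ⟨α', hα'⟩ : ∃ α' : Q' ⟶ Q, α' ≫ p = p' := ⟨_, Projective.factorThru_comp p' p⟩
  obtain ⟨β, hβ⟩ : ∃ β : K ⟶ K', β ≫ m' = m ≫ α :=
    ⟨hS'.exact.lift (m ≫ α) (by simp [hα, w]), hS'.exact.lift_f _ _⟩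
  obtain ⟨β', hβ'⟩ : ∃ β' : K' ⟶ K, β' ≫ m = m' ≫ α' :=
    ⟨hS.exact.lift (m' ≫ α') (by simp [hα', w']), hS.exact.lift_f _ _⟩
  obtain ⟨σ, hσ⟩ : ∃ σ : Q' ⟶ K', σ ≫ m' = α' ≫ α - 𝟙 Q' :=
    ⟨hS'.exact.lift _ (by simp [hα, hα']), hS'.exact.lift_f _ _⟩
  have hmσ : m' ≫ σ = β' ≫ β - 𝟙 K' := by
    rw [← cancel_mono m']
    simp only [Category.assoc, hσ, hβ, Preadditive.comp_sub, Preadditive.sub_comp,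
      reassoc_of% hβ', Category.comp_id, Category.id_comp]
  obtain ⟨t, ht⟩ := h (β ≫ g)
  refine ⟨α' ≫ t - σ ≫ g, ?_⟩
  rw [Preadditive.comp_sub, ← reassoc_of% hβ', ht, reassoc_of% hmσ, Preadditive.sub_comp,
    Category.assoc, Category.id_comp, sub_sub_cancel]

lemma isSplitMono_kernel_lift_of_projective {S : ShortComplex D} (hS : S.Exact) [Mono S.f]
    [Projective S.X₁] {Q : D} (p : Q ⟶ S.X₂) [Epi p] :
    IsSplitMono (kernel.lift (p ≫ S.g) (kernel.ι p) (by simp)) := by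
  -- the cokernel of this inclusion is `S.X₁` via `q`, and `σ` is a section of `q`
  obtain ⟨q, hq⟩ : ∃ q : kernel (p ≫ S.g) ⟶ S.X₁, q ≫ S.f = kernel.ι _ ≫ p :=
    ⟨hS.lift _ (by simp), hS.lift_f _ _⟩
  obtain ⟨l, hl⟩ : ∃ l : S.X₁ ⟶ Q, l ≫ p = S.f := ⟨_, Projective.factorThru_comp _ _⟩
  obtain ⟨σ, hσ⟩ : ∃ σ : S.X₁ ⟶ kernel (p ≫ S.g), σ ≫ kernel.ι _ = l :=
    ⟨kernel.lift _ l (by rw [reassoc_of% hl, S.zero]), kernel.lift_ι _ _ _⟩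
  have hρ : ((𝟙 _ - q ≫ σ) ≫ kernel.ι (p ≫ S.g)) ≫ p = 0 := by
    simp [reassoc_of% hσ, hl, hq]
  refine ⟨⟨kernel.lift p _ hρ, ?_⟩⟩
  have hjq : kernel.lift (p ≫ S.g) (kernel.ι p) (by simp) ≫ q = 0 := by
    simp [← cancel_mono S.f, hq]
  rw [← cancel_mono (kernel.ι p)]
  simp [Preadditive.comp_sub, reassoc_of% hjq]

lemma CategoryTheory.IsPullback.shortExact_lift_zero {X₁ X₂ X₃ X₄ K : D} {t : X₁ ⟶ X₂}
    {l : X₁ ⟶ X₃} {r : X₂ ⟶ X₄} {b : X₃ ⟶ X₄} (sq : IsPullback t l r b) {k : K ⟶ X₂}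
    {hk : k ≫ r = 0} (hS : (ShortComplex.mk k r hk).ShortExact) [Epi l] :
    (ShortComplex.mk (sq.lift k 0 (by simp [hk])) l (by simp)).ShortExact := by
  have := hS.mono_f
  have : Mono (sq.lift k 0 (by simp [hk])) := mono_of_mono_fac (sq.lift_fst _ _ _)
  refine { exact := ShortComplex.exact_of_f_is_kernel _ ?_ }
  refine KernelFork.IsLimit.ofι' _ _ fun {A} φ hφ => ?_
  have hφr : (φ ≫ t) ≫ r = 0 := by
    rw [Category.assoc, sq.w, reassoc_of% hφ, zero_comp]
  refine ⟨hS.exact.lift _ hφr, sq.hom_ext ?_ ?_⟩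
  · simp [hS.exact.lift_f]
  · simpa using hφ.symm

lemma mem_Fac_of_epi {M : Set D} {X Y : D} (hX : X ∈ Fac M) (e : X ⟶ Y) [Epi e] :
    Y ∈ Fac M := by
  obtain ⟨n, f, hf, e', he'⟩ := hX
  exact ⟨n, f, hf, e' ≫ e, epi_comp e' e⟩

lemma IsRightApprox.epi {M : Set D} {U₀ X : D} {u : U₀ ⟶ X} (hu : IsRightApprox M u)
    (hX : X ∈ Fac M) : Epi u := by
  obtain ⟨n, f, hf, e, he⟩ := hX
  have : HasBiproductsOfShape (Fin n) D := HasFiniteBiproducts.out n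
  choose t ht using fun i => hu (f i) (hf i) (biproduct.ι f i ≫ e)
  have hdesc : biproduct.desc t ≫ u = e := by
    ext i
    rw [biproduct.ι_desc_assoc, ht i]
  have : Epi (biproduct.desc t ≫ u) := hdesc ▸ he
  exact epi_of_epi (biproduct.desc t) u

end

lemma ext1Zero_iff_s12 (X Y : C) :
    ext1Zero X Y ↔ ∀ g : kernel (Projective.π X) ⟶ Y,
      ∃ t : Projective.over X ⟶ Y, kernel.ι (Projective.π X) ≫ t = g := by
  have hc : (ProjectiveResolution.of X).complex = ProjectiveResolution.ofComplex X := by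
    rw [ProjectiveResolution.of]
  have e := (ProjectiveResolution.of X).isoExt (R := ℤ) 1 Y
  rw [hc] at e
  rw [ext1Zero, ← ModuleCat.isZero_iff_subsingleton, e.isZero_iff,
    ← HomologicalComplex.exactAt_iff_isZero_homology,
    HomologicalComplex.exactAt_iff' _ 0 1 2 (by simp) (by simp), ShortComplex.moduleCat_exact_iff]
  exact forall_exists_comp_iff_of_exact ((HomologicalComplex.exactAt_iff' _ 2 1 0 (by simp)
    (by simp)).mp (ProjectiveResolution.ofComplex_exactAt_succ X 0))
    (B := Projective.over (kernel (Projective.π X))) (Q := Projective.over X)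
    _ _ (ProjectiveResolution.ofComplex_d_1_0 X).symm

lemma ext1Zero_iff_of_shortExact {S : ShortComplex C} (hS : S.ShortExact) [Projective S.X₂]
    (Y : C) : ext1Zero S.X₃ Y ↔ ∀ g : S.X₁ ⟶ Y, ∃ t : S.X₂ ⟶ Y, S.f ≫ t = g := by
  have hcan : (ShortComplex.mk (kernel.ι (Projective.π S.X₃)) (Projective.π S.X₃)
      (kernel.condition _)).ShortExact :=
    { exact := ShortComplex.exact_of_f_is_kernel _ (kernelIsKernel _) }
  rw [ext1Zero_iff_s12]
  exact ⟨fun h => exists_comp_eq_of_shortExact hcan hS h,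
    fun h => exists_comp_eq_of_shortExact hS hcan h⟩

lemma ext1Zero_of_injective (X : C) {I : C} [Injective I] : ext1Zero X I :=
  (ext1Zero_iff_s12 X I).mpr fun g => ⟨Injective.factorThru g _, Injective.comp_factorThru _ _⟩

lemma ext1Zero_X₁_of_exact (V : C) {S : ShortComplex C} (hS : S.Exact) [Mono S.f]
    (hlift : ∀ h : V ⟶ S.X₃, ∃ t : V ⟶ S.X₂, t ≫ S.g = h) (hV : ext1Zero V S.X₂) :
    ext1Zero V S.X₁ := by
  set π := Projective.π V
  rw [ext1Zero_iff_s12] at hV ⊢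
  intro g
  obtain ⟨s, hs⟩ := hV (g ≫ S.f)
  have hsg : kernel.ι π ≫ s ≫ S.g = 0 := by rw [reassoc_of% hs, S.zero, comp_zero]
  obtain ⟨u, hu⟩ := hlift (Abelian.epiDesc π (s ≫ S.g) hsg)
  have hd : (s - π ≫ u) ≫ S.g = 0 := by
    rw [Preadditive.sub_comp, Category.assoc, hu, Abelian.comp_epiDesc, sub_self]
  refine ⟨hS.lift _ hd, ?_⟩
  rw [← cancel_mono S.f, Category.assoc, hS.lift_f, Preadditive.comp_sub, hs,
    kernel.condition_assoc, zero_comp, sub_zero]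

lemma ext1Zero_X₂_of_shortExact (V : C) {S : ShortComplex C} (hS : S.ShortExact)
    (h₁ : ext1Zero V S.X₁) (h₃ : ext1Zero V S.X₃) : ext1Zero V S.X₂ := by
  have := hS.mono_f
  have := hS.epi_g
  rw [ext1Zero_iff_s12] at h₁ h₃ ⊢
  intro g
  obtain ⟨s, hs⟩ := h₃ (g ≫ S.g)
  obtain ⟨s', hs'⟩ : ∃ s' : Projective.over V ⟶ S.X₂, s' ≫ S.g = s :=
    ⟨_, Projective.factorThru_comp s S.g⟩
  have hd : (g - kernel.ι (Projective.π V) ≫ s') ≫ S.g = 0 := by simp [hs', hs]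
  obtain ⟨t, ht⟩ := h₁ (hS.exact.lift _ hd)
  refine ⟨s' + t ≫ S.f, ?_⟩
  rw [Preadditive.comp_add, reassoc_of% ht, hS.exact.lift_f, add_sub_cancel]

lemma ext1Zero_X₂_of_ext1Zero_X₃_of_projective {S : ShortComplex C} (hS : S.ShortExact)
    [Projective S.X₁] {Y : C} (h : ext1Zero S.X₃ Y) : ext1Zero S.X₂ Y := by
  have := hS.mono_f
  have := hS.epi_g
  set p := Projective.π S.X₂
  have hW : (ShortComplex.mk (kernel.ι (p ≫ S.g)) (p ≫ S.g) (kernel.condition _)).ShortExact :=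
    { exact := ShortComplex.exact_of_f_is_kernel _ (kernelIsKernel _) }
  set j := kernel.lift (p ≫ S.g) (kernel.ι p) (by simp)
  have : IsSplitMono j := isSplitMono_kernel_lift_of_projective hS.exact p
  rw [ext1Zero_iff_s12]
  intro g
  obtain ⟨t, ht⟩ := (ext1Zero_iff_of_shortExact hW Y).mp h (retraction j ≫ g)
  refine ⟨t, ?_⟩
  rw [← kernel.lift_ι (p ≫ S.g) (kernel.ι p) (by simp), Category.assoc]
  simp only at ht
  rw [ht, IsSplitMono.id_assoc]

lemma isSplitEpi_of_ext1Zero {S : ShortComplex C} (hS : S.ShortExact) (h : ext1Zero S.X₃ S.X₁) :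
    IsSplitEpi S.g := by
  have := hS.mono_f
  have := hS.epi_g
  set π := Projective.π S.X₃
  obtain ⟨φ, hφ⟩ : ∃ φ : Projective.over S.X₃ ⟶ S.X₂, φ ≫ S.g = π :=
    ⟨_, Projective.factorThru_comp π S.g⟩
  have hψ : (kernel.ι π ≫ φ) ≫ S.g = 0 := by simp [hφ]
  obtain ⟨t, ht⟩ := (ext1Zero_iff_s12 _ _).mp h (hS.exact.lift _ hψ)
  have hd : kernel.ι π ≫ (φ - t ≫ S.f) = 0 := by
    rw [Preadditive.comp_sub, reassoc_of% ht, hS.exact.lift_f, sub_self]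
  refine ⟨⟨Abelian.epiDesc π _ hd, ?_⟩⟩
  rw [← cancel_epi π, Abelian.comp_epiDesc_assoc, Preadditive.sub_comp, hφ, Category.assoc,
    S.zero, comp_zero, sub_zero, Category.comp_id]

lemma IsRightApprox.kernel_mem_Perp1 {M : Set C} {U₀ X : C} {u : U₀ ⟶ X}
    (hu : IsRightApprox M u) (hU₀ : U₀ ∈ Perp1 M) : kernel u ∈ Perp1 M := fun V hV =>
  ext1Zero_X₁_of_exact V (S := ShortComplex.mk (kernel.ι u) u (kernel.condition u))
    (ShortComplex.exact_of_f_is_kernel _ (kernelIsKernel u)) (hu V hV) (hU₀ V hV)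

lemma exists_shortExact_mem_Perp1 [EnoughInjectives C] {U : Set C}
    (hcf : ∀ X : C, ∃ U₀ ∈ U, ∃ u : U₀ ⟶ X, IsRightApprox U u)
    (hrigid : ∀ U₀ ∈ U, ∀ U₁ ∈ U, ext1Zero U₀ U₁) (hperp : Perp1 U ⊆ Fac U) (P : C) :
    ∃ (E W : C) (e : P ⟶ E) (s : E ⟶ W) (w : e ≫ s = 0),
      W ∈ U ∧ E ∈ Perp1 U ∧ (ShortComplex.mk e s w).ShortExact := by
  set ι := Injective.ι P
  have hI : Injective.under P ∈ Perp1 U := fun V _ => ext1Zero_of_injective V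
  obtain ⟨W, hW, w, hw⟩ := hcf (cokernel ι)
  have := hw.epi (mem_Fac_of_epi (hperp hI) (cokernel.π ι))
  have hSP : (ShortComplex.mk ι (cokernel.π ι) (cokernel.condition ι)).ShortExact :=
    { exact := ShortComplex.exact_of_g_is_cokernel _ (cokernelIsCokernel ι) }
  have hSL : (ShortComplex.mk (kernel.ι w) w (kernel.condition w)).ShortExact :=
    { exact := ShortComplex.exact_of_f_is_kernel _ (kernelIsKernel w) }
  have sq := IsPullback.of_hasPullback (cokernel.π ι) w
  have hL : kernel w ∈ Perp1 U := hw.kernel_mem_Perp1 fun V hV => hrigid V hV W hW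
  refine ⟨_, W, _, _, _, hW, fun V hV => ?_, sq.shortExact_lift_zero hSP⟩
  exact ext1Zero_X₂_of_shortExact V (sq.flip.shortExact_lift_zero hSL) (hL V hV) (hI V hV)

lemma mem_of_shortExact_of_projective {U : Set C}
    (hsummand : ∀ M₀ ∈ U, ∀ (X : C) (r : M₀ ⟶ X) (s : X ⟶ M₀), s ≫ r = 𝟙 X → X ∈ U)
    (hcf : ∀ X : C, ∃ U₀ ∈ U, ∃ u : U₀ ⟶ X, IsRightApprox U u)
    (hrigid : ∀ U₀ ∈ U, ∀ U₁ ∈ U, ext1Zero U₀ U₁) (hperp : Perp1 U ⊆ Fac U)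
    {S : ShortComplex C} (hS : S.ShortExact) [Projective S.X₁] (h₃ : S.X₃ ∈ U)
    (h₂ : S.X₂ ∈ Perp1 U) : S.X₂ ∈ U := by
  obtain ⟨U₀, hU₀, r, hr⟩ := hcf S.X₂
  have := hr.epi (hperp h₂)
  have hK : kernel r ∈ Perp1 U := hr.kernel_mem_Perp1 fun V hV => hrigid V hV U₀ hU₀
  have : IsSplitEpi r := isSplitEpi_of_ext1Zero
    (S := ShortComplex.mk (kernel.ι r) r (kernel.condition r))
    { exact := ShortComplex.exact_of_f_is_kernel _ (kernelIsKernel r) }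
    (ext1Zero_X₂_of_ext1Zero_X₃_of_projective hS (hK _ h₃))
  exact hsummand U₀ hU₀ _ r (section_ r) (IsSplitEpi.id r)

theorem stmt12 [EnoughInjectives C] (U : Set C)
    (hsummand : ∀ M₀ ∈ U, ∀ (X : C) (r : M₀ ⟶ X) (s : X ⟶ M₀), s ≫ r = 𝟙 X → X ∈ U)
    (hcf : ∀ X : C, ∃ U₀ ∈ U, ∃ u : U₀ ⟶ X, IsRightApprox U u)
    (hpt : PartialTilting U) (hperp : Perp1 U = Fac U) :
    ∀ P : C, Projective P →
      ∃ Ua ∈ U, ∃ Ub ∈ U, ∃ (i : P ⟶ Ua) (p : Ua ⟶ Ub), SES i p := by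
  intro P hP
  obtain ⟨E, W, e, s, w, hW, hE, hS⟩ := exists_shortExact_mem_Perp1 hcf hpt.2 hperp.subset P
  have hEU : E ∈ U := mem_of_shortExact_of_projective hsummand hcf hpt.2 hperp.subset hS hW hE
  exact ⟨E, hEU, W, hW, e, s, w, hS.exact, hS.mono_f, hS.epi_g⟩
end
end
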